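/- arXiv:1903.06087 — 3 statements merged into one kernel-verified Lean document; each statement's English description precedes it below -/
import Mathlib

section
/- Let G be a finite simple graph that is C₅-free (contains no cycle on 5 vertices as a subgraph). Then 4·ω₂'(G) ≤ σ(G)², where σ(G) is the Ore-degree of G. -/
open SimpleGraph

/-- `G.ContainsSub H` means `G` contains a copy of `H` as a (not necessarily induced)
subgraph, i.e. there is an injective graph homomorphism from `H` to `G`. -/
def SimpleGraph.ContainsSub {V W : Type*} (G : SimpleGraph V) (H : SimpleGraph W) : Prop :=
  ∃ f : W → V, Function.Injective f ∧ ∀ a b, H.Adj a b → G.Adj (f a) (f b)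

/-- A strong clique of `G`: a set of edges of `G` any two distinct members of which
either share an endpoint or have endpoints joined by an edge of `G`. -/
def SimpleGraph.IsStrongClique {V : Type*} (G : SimpleGraph V) (F : Finset (Sym2 V)) : Prop :=
  (F : Set (Sym2 V)) ⊆ G.edgeSet ∧
    ∀ e ∈ F, ∀ f ∈ F, e ≠ f → ∃ x ∈ e, ∃ y ∈ f, x = y ∨ G.Adj x y

/-- The strong clique number `ω₂'(G)`: the largest cardinality of a strong clique. -/
noncomputable def SimpleGraph.strongCliqueNumber {V : Type*} (G : SimpleGraph V) : ℕ :=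
  sSup {n | ∃ F : Finset (Sym2 V), G.IsStrongClique F ∧ F.card = n}

/-- The Ore-degree `σ(G)` of `G`: the maximum over edges `xy` of `deg x + deg y`
(`0` if `G` has no edges). -/
def SimpleGraph.oreDegree {V : Type*} [Fintype V] [DecidableEq V] (G : SimpleGraph V)
    [DecidableRel G.Adj] : ℕ :=
  G.edgeFinset.sup fun e =>
    Sym2.lift ⟨fun x y => G.degree x + G.degree y, fun _ _ => Nat.add_comm _ _⟩ e

/-!
Let `F` be a strong clique, viewed as a subgraph `H ≤ G`, and let `x` be a vertex of maximum
`H`-degree, with `H`-neighbourhood `Y`. The edges of `F` meeting `N_G[x]` are counted by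
`∑ w ∈ N_G(x), deg_H w`. An edge `uv` of `F` avoiding `N_G[x]` must reach every `y ∈ Y`, so by
`C₅`-freeness one of its endpoints `z` is adjacent to all of `Y` (otherwise `x y' u v y` is a
5-cycle). Since `deg_H z ≤ |Y|`, at most `|Y \ N_H(z)|` such edges are charged to `z`; by double
counting they can be charged instead to the pairs `(y, z)`, `y ∈ Y`, with `z` a `G`-neighbour but
not an `H`-neighbour of `y`. Altogether `|F| ≤ ∑ w ∈ N_G(x), deg_G w ≤ d (σ - d) ≤ σ² / 4`,
where `d = deg_G x`.
-/

open Finset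

theorem Finset.sum_add_sum_le_sum_of_subset {ι M : Type*} [DecidableEq ι] [AddCommMonoid M]
    [PartialOrder M] [IsOrderedAddMonoid M] {s t : Finset ι} {f g c : ι → M} (hst : s ⊆ t)
    (hfg : ∀ i ∈ t, f i ≤ g i) (hc : ∀ i ∈ s, f i + c i ≤ g i) :
    ∑ i ∈ t, f i + ∑ i ∈ s, c i ≤ ∑ i ∈ t, g i := by
  calc ∑ i ∈ t, f i + ∑ i ∈ s, c i = ∑ i ∈ t \ s, f i + ∑ i ∈ s, (f i + c i) := by
        rw [← sum_sdiff hst, sum_add_distrib, add_assoc]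
    _ ≤ ∑ i ∈ t \ s, g i + ∑ i ∈ s, g i :=
        add_le_add (sum_le_sum fun i hi => hfg i (sdiff_subset hi)) (sum_le_sum hc)
    _ = ∑ i ∈ t, g i := sum_sdiff hst

namespace SimpleGraph

variable {V : Type*}

theorem containsSub_cycleGraph_five (G : SimpleGraph V) {v₀ v₁ v₂ v₃ v₄ : V}
    (h₀₁ : G.Adj v₀ v₁) (h₁₂ : G.Adj v₁ v₂) (h₂₃ : G.Adj v₂ v₃) (h₃₄ : G.Adj v₃ v₄)
    (h₄₀ : G.Adj v₄ v₀) (n₀₂ : v₀ ≠ v₂) (n₀₃ : v₀ ≠ v₃) (n₁₃ : v₁ ≠ v₃) (n₁₄ : v₁ ≠ v₄)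
    (n₂₄ : v₂ ≠ v₄) : G.ContainsSub (cycleGraph 5) := by
  refine ⟨![v₀, v₁, v₂, v₃, v₄], fun a b hab => ?_, fun a b hab => ?_⟩
  · have := h₀₁.ne; have := h₁₂.ne; have := h₂₃.ne; have := h₃₄.ne; have := h₄₀.ne
    fin_cases a <;> fin_cases b <;> simp_all
  · fin_cases a <;> fin_cases b <;> first | exact absurd hab (by decide) | simp_all [G.adj_comm]

theorem forall_adj_or_forall_adj_of_not_containsSub_cycleGraph_five {G : SimpleGraph V}
    (hfree : ¬G.ContainsSub (cycleGraph 5)) {x u v : V} {Y : Finset V}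
    (hY : ∀ y ∈ Y, G.Adj x y) (huv : G.Adj u v) (hxu : x ≠ u) (hxv : x ≠ v)
    (hnxu : ¬G.Adj x u) (hnxv : ¬G.Adj x v) (hcover : ∀ y ∈ Y, G.Adj u y ∨ G.Adj v y) :
    (∀ y ∈ Y, G.Adj u y) ∨ ∀ y ∈ Y, G.Adj v y := by
  by_contra! ⟨⟨y, hy, huy⟩, ⟨y', hy', hvy'⟩⟩
  have hvy : G.Adj v y := (hcover y hy).resolve_left huy
  have huy' : G.Adj u y' := (hcover y' hy').resolve_right hvy'
  -- `x y' u v y` is a 5-cycle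
  refine hfree (G.containsSub_cycleGraph_five (hY y' hy') huy'.symm huv hvy (hY y hy).symm
    hxu hxv ?_ ?_ ?_)
  · rintro rfl; exact hnxv (hY _ hy')
  · rintro rfl; exact huy huy'
  · rintro rfl; exact hnxu (hY _ hy)

theorem le_of_isStrongClique_edgeFinset {G H : SimpleGraph V} [Fintype H.edgeSet]
    (hH : G.IsStrongClique H.edgeFinset) : H ≤ G := by
  simpa using hH.1

theorem neighborFinset_subset_of_le [Fintype V] {G H : SimpleGraph V} [DecidableRel G.Adj]
    [DecidableRel H.Adj] (hHG : H ≤ G) (v : V) : H.neighborFinset v ⊆ G.neighborFinset v :=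
  fun w hw => (G.mem_neighborFinset v w).2 (hHG ((H.mem_neighborFinset v w).1 hw))

section Neighborhoods

variable [Fintype V] [DecidableEq V] {G H : SimpleGraph V} [DecidableRel G.Adj]
  [DecidableRel H.Adj]

theorem sum_card_sdiff_neighborFinset_comm (s t : Finset V) :
    ∑ a ∈ s, #(t \ H.neighborFinset a) = ∑ b ∈ t, #(s \ H.neighborFinset b) := by
  simp_rw [sdiff_eq_filter, card_filter, mem_neighborFinset]
  rw [sum_comm]
  simp_rw [H.adj_comm]

theorem sum_card_sdiff_neighborFinset_le_of_forall_degree_le {x : V}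
    (hx : ∀ v, H.degree v ≤ H.degree x) (Z : Finset V) :
    ∑ z ∈ Z, #(H.neighborFinset z \ H.neighborFinset x) ≤
      ∑ y ∈ H.neighborFinset x, #(Z \ H.neighborFinset y) := by
  rw [← sum_card_sdiff_neighborFinset_comm]
  exact sum_le_sum fun z _ => card_sdiff_le_card_sdiff_iff.2 (by simpa using hx z)

theorem degree_add_card_sdiff_neighborFinset_le (hHG : H ≤ G) {y : V} {Z : Finset V}
    (hZ : Z ⊆ G.neighborFinset y) : H.degree y + #(Z \ H.neighborFinset y) ≤ G.degree y := by
  rw [← card_neighborFinset_eq_degree, ← card_neighborFinset_eq_degree, add_comm,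
    card_sdiff_add_card]
  exact card_le_card (union_subset hZ (neighborFinset_subset_of_le hHG y))

end Neighborhoods

section StrongCliqueGraph

variable [Fintype V] {G H : SimpleGraph V} [DecidableRel H.Adj] [Fintype H.edgeSet]

theorem exists_mem_forall_adj_of_isStrongClique (hfree : ¬G.ContainsSub (cycleGraph 5))
    (hH : G.IsStrongClique H.edgeFinset) {x : V} {e : Sym2 V} (he : e ∈ H.edgeSet)
    (hfar : ¬∃ v ∈ e, v = x ∨ G.Adj x v) : ∃ z ∈ e, ∀ y ∈ H.neighborFinset x, G.Adj z y := by
  induction e using Sym2.ind with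
  | h u v =>
  simp only [Sym2.mem_iff, exists_eq_or_imp, exists_eq_left, not_or] at hfar
  obtain ⟨⟨hux, hnxu⟩, hvx, hnxv⟩ := hfar
  have hHG := le_of_isStrongClique_edgeFinset hH
  have hcover : ∀ y ∈ H.neighborFinset x, G.Adj u y ∨ G.Adj v y := by
    intro y hy
    rw [mem_neighborFinset] at hy
    have hxe : x ∉ s(u, v) := by simp [Ne.symm hux, Ne.symm hvx]
    have hne : s(u, v) ≠ s(x, y) := fun h => hxe (h ▸ Sym2.mem_mk_left x y)
    obtain ⟨p, hp, q, hq, hpq⟩ := hH.2 _ (mem_edgeFinset.2 he) _ (mem_edgeFinset.2 hy) hne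
    -- `p` is neither `x`, nor adjacent to `x`, nor equal to the neighbour `y` of `x`
    rw [Sym2.mem_iff] at hp hq
    rcases hp with rfl | rfl <;> rcases hq with rfl | rfl <;> rcases hpq with rfl | hpq <;>
      simp_all [G.adj_comm, hHG hy]
  simpa using forall_adj_or_forall_adj_of_not_containsSub_cycleGraph_five hfree
    (fun y hy => hHG ((mem_neighborFinset _ _ _).1 hy)) (hHG he) (Ne.symm hux) (Ne.symm hvx)
    hnxu hnxv hcover

variable [DecidableEq V] [DecidableRel G.Adj]

theorem card_filter_exists_mem_le_sum_degree (hHG : H ≤ G) (x : V) :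
    #{e ∈ H.edgeFinset | ∃ v ∈ e, v = x ∨ G.Adj x v} ≤ ∑ w ∈ G.neighborFinset x, H.degree w := by
  simp_rw [← card_incidenceFinset_eq_degree]
  refine (card_le_card fun e he => ?_).trans card_biUnion_le
  induction e using Sym2.ind with
  | h a b =>
  simp only [mem_filter, mem_edgeFinset, mem_edgeSet, Sym2.mem_iff, exists_eq_or_imp,
    exists_eq_left] at he
  simp only [mem_biUnion, mem_neighborFinset, mem_incidenceFinset, incidenceSet]
  obtain ⟨hab, (rfl | hxa) | (rfl | hxb)⟩ := he
  exacts [⟨b, hHG hab, hab, Sym2.mem_mk_right _ _⟩, ⟨a, hxa, hab, Sym2.mem_mk_left _ _⟩,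
    ⟨a, hHG hab.symm, hab, Sym2.mem_mk_left _ _⟩, ⟨b, hxb, hab, Sym2.mem_mk_right _ _⟩]

theorem card_filter_not_exists_mem_le_sum_card_sdiff (hfree : ¬G.ContainsSub (cycleGraph 5))
    (hH : G.IsStrongClique H.edgeFinset) (x : V) :
    #{e ∈ H.edgeFinset | ¬∃ v ∈ e, v = x ∨ G.Adj x v} ≤
      ∑ z ∈ {z | ∀ y ∈ H.neighborFinset x, G.Adj z y},
        #(H.neighborFinset z \ H.neighborFinset x) := by
  refine (card_le_card fun e he => ?_).trans
    (card_biUnion_le.trans (sum_le_sum fun z _ => card_image_le (f := (s(z, ·)))))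
  rw [mem_filter, mem_edgeFinset] at he
  obtain ⟨z, hze, hz⟩ := exists_mem_forall_adj_of_isStrongClique hfree hH he.1 he.2
  have hHz : H.Adj z (Sym2.Mem.other hze) := by rw [← mem_edgeSet, Sym2.other_spec]; exact he.1
  have hnHx : ¬H.Adj x (Sym2.Mem.other hze) := fun h =>
    he.2 ⟨_, Sym2.other_mem hze, .inr (le_of_isStrongClique_edgeFinset hH h)⟩
  simp only [mem_biUnion, mem_filter, mem_univ, true_and, mem_image, mem_sdiff,
    mem_neighborFinset] at hz ⊢
  exact ⟨z, hz, _, ⟨hHz, hnHx⟩, Sym2.other_spec hze⟩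

theorem card_edgeFinset_le_sum_degree_of_isStrongClique (hfree : ¬G.ContainsSub (cycleGraph 5))
    (hH : G.IsStrongClique H.edgeFinset) {x : V} (hx : ∀ v, H.degree v ≤ H.degree x) :
    #H.edgeFinset ≤ ∑ w ∈ G.neighborFinset x, G.degree w := by
  have hHG := le_of_isStrongClique_edgeFinset hH
  set Z : Finset V := {z | ∀ y ∈ H.neighborFinset x, G.Adj z y}
  calc #H.edgeFinset
      = #{e ∈ H.edgeFinset | ∃ v ∈ e, v = x ∨ G.Adj x v} +
          #{e ∈ H.edgeFinset | ¬∃ v ∈ e, v = x ∨ G.Adj x v} :=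
        (card_filter_add_card_filter_not _).symm
    _ ≤ ∑ w ∈ G.neighborFinset x, H.degree w + ∑ y ∈ H.neighborFinset x,
          #(Z \ H.neighborFinset y) :=
        add_le_add (card_filter_exists_mem_le_sum_degree hHG x)
          ((card_filter_not_exists_mem_le_sum_card_sdiff hfree hH x).trans
            (sum_card_sdiff_neighborFinset_le_of_forall_degree_le hx _))
    _ ≤ ∑ w ∈ G.neighborFinset x, G.degree w :=
        sum_add_sum_le_sum_of_subset (neighborFinset_subset_of_le hHG x)
          (fun _ _ => degree_le_of_le hHG) fun y hy =>
            degree_add_card_sdiff_neighborFinset_le hHG fun z hz => by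
              simpa [G.adj_comm] using (mem_filter.1 hz).2 y hy

end StrongCliqueGraph

section OreDegree

variable [Fintype V] [DecidableEq V] {G : SimpleGraph V} [DecidableRel G.Adj]

theorem degree_add_degree_le_oreDegree {v w : V} (h : G.Adj v w) :
    G.degree v + G.degree w ≤ G.oreDegree :=
  le_sup (f := fun e => Sym2.lift ⟨fun x y => G.degree x + G.degree y, fun _ _ => add_comm _ _⟩ e)
    (G.mem_edgeFinset.2 h : s(v, w) ∈ G.edgeFinset)

theorem four_mul_sum_degree_neighborFinset_le_oreDegree_sq (x : V) :
    4 * ∑ w ∈ G.neighborFinset x, G.degree w ≤ G.oreDegree ^ 2 := by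
  have hsum : ∑ w ∈ G.neighborFinset x, G.degree w + G.degree x * G.degree x ≤
      G.degree x * G.oreDegree := by
    calc ∑ w ∈ G.neighborFinset x, G.degree w + G.degree x * G.degree x
        = ∑ w ∈ G.neighborFinset x, (G.degree x + G.degree w) := by
          rw [sum_add_distrib, sum_const, card_neighborFinset_eq_degree, smul_eq_mul, add_comm]
      _ ≤ ∑ _w ∈ G.neighborFinset x, G.oreDegree :=
          sum_le_sum fun w hw => degree_add_degree_le_oreDegree ((mem_neighborFinset _ _ _).1 hw)
      _ = G.degree x * G.oreDegree := by rw [sum_const, card_neighborFinset_eq_degree, smul_eq_mul]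
  -- `d (σ - d) ≤ σ² / 4`
  nlinarith [sq_nonneg ((G.oreDegree : ℤ) - 2 * G.degree x)]

end OreDegree

theorem exists_isStrongClique_card_eq_strongCliqueNumber [Finite V] (G : SimpleGraph V) :
    ∃ F, G.IsStrongClique F ∧ #F = G.strongCliqueNumber := by
  have := Fintype.ofFinite (Sym2 V)
  refine Nat.sSup_mem (s := {n | ∃ F, G.IsStrongClique F ∧ #F = n})
    ⟨0, ∅, by simp [IsStrongClique], rfl⟩ ⟨Fintype.card (Sym2 V), ?_⟩
  rintro _ ⟨F, -, rfl⟩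
  exact F.card_le_univ

theorem IsStrongClique.four_mul_card_le_oreDegree_sq [Fintype V] [DecidableEq V]
    {G : SimpleGraph V} [DecidableRel G.Adj] (hfree : ¬G.ContainsSub (cycleGraph 5))
    {F : Finset (Sym2 V)} (hF : G.IsStrongClique F) : 4 * #F ≤ G.oreDegree ^ 2 := by
  rcases isEmpty_or_nonempty V with hV | hV
  · simp [F.eq_empty_of_isEmpty]
  set H := fromEdgeSet (F : Set (Sym2 V))
  have hHF : H.edgeFinset = F := by
    ext e
    simp only [H, mem_edgeFinset, edgeSet_fromEdgeSet, Set.mem_sdiff, mem_coe, and_iff_left_iff_imp]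
    exact fun he => G.not_isDiag_of_mem_edgeSet (hF.1 he)
  obtain ⟨x, hx⟩ := H.exists_maximal_degree_vertex
  calc 4 * #F = 4 * #H.edgeFinset := by rw [hHF]
    _ ≤ 4 * ∑ w ∈ G.neighborFinset x, G.degree w :=
        Nat.mul_le_mul_left 4 (card_edgeFinset_le_sum_degree_of_isStrongClique hfree
          (by rwa [hHF]) fun v => hx ▸ H.degree_le_maxDegree v)
    _ ≤ G.oreDegree ^ 2 := four_mul_sum_degree_neighborFinset_le_oreDegree_sq x

end SimpleGraph

/-- Theorem 2.1: if `G` is `C₅`-free, then `ω₂'(G) ≤ σ(G)² / 4`,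
where `σ(G)` is the Ore-degree of `G`. -/
theorem strongCliqueNumber_le_oreDegree_sq {V : Type*} [Fintype V] [DecidableEq V]
    (G : SimpleGraph V) [DecidableRel G.Adj]
    (hfree : ¬ G.ContainsSub (cycleGraph 5)) :
    4 * G.strongCliqueNumber ≤ G.oreDegree ^ 2 := by
  obtain ⟨F, hF, hcard⟩ := G.exists_isStrongClique_card_eq_strongCliqueNumber
  exact hcard ▸ hF.four_mul_card_le_oreDegree_sq hfree
end

section
/- Let k ≥ 2 be an integer and let G be a finite simple graph containing no cycle on 2k+1 vertices as a subgraph. Let v, x, y, b be four distinct vertices of G such that xy, yb, and bv are edges of G, let X ⊆ N(v) ∩ N(x), and let T be a set of vertices of G such that X and T are disjoint and both are disjoint from {v, x, y, b}. Then the bipartite subgraph of G consisting of exactly those edges with one endpoint in X and one endpoint in T contains no path on 2k−1 vertices as a subgraph. -/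
/-!
Along a path in the bipartite graph between `X` and `T` the two sides alternate, so a path on
`2k - 1` vertices contains a subpath on `2k - 3` vertices with both ends in `X`. Both ends are
then joined to the path `x y b v` (the first end through `v`, the last through `x`), giving a
cycle on `2k + 1` vertices in `G`.
-/

open SimpleGraph

/-- The bipartite subgraph of `G` consisting of exactly those edges with one
endpoint in `S` and the other endpoint in `T`. -/
def SimpleGraph.betweenGraph {V : Type*} (G : SimpleGraph V) (S T : Set V) : SimpleGraph V where
  Adj a b := G.Adj a b ∧ ((a ∈ S ∧ b ∈ T) ∨ (a ∈ T ∧ b ∈ S))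
  symm := by
    constructor
    intro a b h
    exact ⟨h.1.symm, h.2.elim (fun hab => Or.inr ⟨hab.2, hab.1⟩) (fun hab => Or.inl ⟨hab.2, hab.1⟩)⟩
  loopless := by
    constructor
    intro a h
    exact G.loopless.irrefl a h.1

open Set

def seqAppend {V : Type*} (p : ℕ → V) (m : ℕ) (q : ℕ → V) : ℕ → V :=
  fun i => if i ≤ m then p i else q (i - (m + 1))

namespace SimpleGraph

variable {V : Type*} {G H : SimpleGraph V}

/-- `p 0, p 1, …, p n` is a path in `G`. -/
structure IsPathSeq (G : SimpleGraph V) (p : ℕ → V) (n : ℕ) : Prop where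
  injOn : InjOn p (Iic n)
  adj : ∀ i < n, G.Adj (p i) (p (i + 1))

namespace IsPathSeq

variable {p q : ℕ → V} {m n : ℕ}

lemma mono (hp : G.IsPathSeq p n) (hGH : G ≤ H) : H.IsPathSeq p n :=
  ⟨hp.injOn, fun i hi => hGH (hp.adj i hi)⟩

lemma segment (hp : G.IsPathSeq p n) {s m : ℕ} (hsm : s + m ≤ n) :
    G.IsPathSeq (fun i => p (s + i)) m where
  injOn i hi j hj hij := by
    rw [mem_Iic] at hi hj
    have := hp.injOn (mem_Iic.2 (by omega)) (mem_Iic.2 (by omega)) hij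
    omega
  adj i hi := hp.adj (s + i) (by omega)

lemma append (hp : G.IsPathSeq p m) (hq : G.IsPathSeq q n)
    (hdisj : Disjoint (p '' Iic m) (q '' Iic n)) (hpq : G.Adj (p m) (q 0)) :
    G.IsPathSeq (seqAppend p m q) (m + n + 1) where
  injOn i hi j hj hij := by
    simp only [mem_Iic] at hi hj
    unfold seqAppend at hij
    split_ifs at hij with hi' hj' hj'
    · exact hp.injOn hi' hj' hij
    · exact Set.disjoint_left.1 hdisj ⟨i, hi', rfl⟩ ⟨j - (m + 1), mem_Iic.2 (by omega), hij.symm⟩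
        |>.elim
    · exact Set.disjoint_left.1 hdisj ⟨j, hj', rfl⟩ ⟨i - (m + 1), mem_Iic.2 (by omega), hij⟩
        |>.elim
    · have := hq.injOn (mem_Iic.2 (by omega)) (mem_Iic.2 (by omega)) hij
      omega
  adj i hi := by
    unfold seqAppend
    rcases lt_trichotomy i m with h | rfl | h
    · simpa [h.le, Nat.succ_le_of_lt h] using hp.adj i h
    · simpa using hpq
    · simpa [h.not_ge, (h.trans (Nat.lt_succ_self i)).not_ge, Nat.sub_add_comm h]
        using hq.adj (i - (m + 1)) (by omega)

lemma containsSub_cycleGraph (hp : G.IsPathSeq p n) (hclose : G.Adj (p n) (p 0)) :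
    G.ContainsSub (cycleGraph (n + 1)) := by
  have hsucc : ∀ u w : Fin (n + 1), (w - u).val = 1 → G.Adj (p u) (p w) := by
    intro u w hwu
    rcases le_or_gt u w with h | h
    · rw [Fin.sub_val_of_le h] at hwu
      simpa [show w.val = u.val + 1 by omega] using hp.adj u (by omega)
    · rw [Fin.coe_sub_iff_lt.2 h] at hwu
      simpa [show u.val = n by omega, show w.val = 0 by omega] using hclose
  refine ⟨fun i => p i, fun i j hij => Fin.ext (hp.injOn ?_ ?_ hij), fun u w huw => ?_⟩
  · exact mem_Iic.2 (Nat.lt_succ_iff.1 i.2)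
  · exact mem_Iic.2 (Nat.lt_succ_iff.1 j.2)
  · rcases cycleGraph_adj'.1 huw with h | h
    · exact (hsucc w u h).symm
    · exact hsucc u w h

end IsPathSeq

lemma ContainsSub.exists_isPathSeq {n : ℕ} (h : G.ContainsSub (pathGraph (n + 1))) :
    ∃ p, G.IsPathSeq p n := by
  obtain ⟨f, hinj, hadj⟩ := h
  refine ⟨fun i => f ⟨min i n, Nat.lt_succ_of_le (min_le_right i n)⟩,
    fun i hi j hj hij => ?_, fun i hi => hadj _ _ ?_⟩
  · have := congrArg Fin.val (hinj hij)
    simp only [mem_Iic] at hi hj this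
    omega
  · simp only [pathGraph_adj]
    omega

section betweenGraph

variable {S T : Set V} {a c : V} {p : ℕ → V} {n : ℕ}

lemma betweenGraph_comm : G.betweenGraph S T = G.betweenGraph T S := by
  ext a c
  simp only [betweenGraph, or_comm]

lemma betweenGraph_le : G.betweenGraph S T ≤ G := fun _ _ h => h.1

lemma mem_union_of_betweenGraph_adj (h : (G.betweenGraph S T).Adj a c) : a ∈ S ∪ T := by
  rcases h.2 with ⟨ha, -⟩ | ⟨ha, -⟩
  exacts [Or.inl ha, Or.inr ha]

lemma mem_right_of_betweenGraph_adj (hST : Disjoint S T) (h : (G.betweenGraph S T).Adj a c)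
    (ha : a ∈ S) : c ∈ T := by
  rcases h.2 with ⟨-, hc⟩ | ⟨ha', -⟩
  exacts [hc, (Set.disjoint_left.1 hST ha ha').elim]

lemma IsPathSeq.mem_union {i : ℕ} (hp : (G.betweenGraph S T).IsPathSeq p (n + 1))
    (hi : i ≤ n + 1) : p i ∈ S ∪ T := by
  rcases hi.lt_or_eq with hi | rfl
  · exact mem_union_of_betweenGraph_adj (hp.adj i hi)
  · have hadj := (hp.adj n (by omega)).symm
    rw [betweenGraph_comm] at hadj
    exact union_comm T S ▸ mem_union_of_betweenGraph_adj hadj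

lemma IsPathSeq.mem_of_even (hST : Disjoint S T) {i : ℕ}
    (hp : (G.betweenGraph S T).IsPathSeq p n) (hi : p i ∈ S) :
    ∀ j, i + 2 * j ≤ n → p (i + 2 * j) ∈ S
  | 0, _ => hi
  | j + 1, hj => by
    have hT : p (i + 2 * j + 1) ∈ T :=
      mem_right_of_betweenGraph_adj hST (hp.adj _ (by omega)) (hp.mem_of_even hST hi j (by omega))
    have hadj := hp.adj (i + 2 * j + 1) (by omega)
    rw [betweenGraph_comm] at hadj
    exact mem_right_of_betweenGraph_adj hST.symm hadj hT

lemma IsPathSeq.exists_ends_mem (hST : Disjoint S T) {m : ℕ}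
    (hp : (G.betweenGraph S T).IsPathSeq p (2 * m + 2)) :
    ∃ s ≤ 1, p s ∈ S ∧ p (s + 2 * m) ∈ S := by
  rcases mem_union_of_betweenGraph_adj (hp.adj 0 (by omega)) with h0 | h0
  · exact ⟨0, zero_le_one, h0, hp.mem_of_even hST h0 m (by omega)⟩
  · have hadj := hp.adj 0 (by omega)
    rw [betweenGraph_comm] at hadj
    have h1 := mem_right_of_betweenGraph_adj hST.symm hadj h0
    exact ⟨1, le_rfl, h1, hp.mem_of_even hST h1 m (by omega)⟩

end betweenGraph

lemma isPathSeq_four {x y b v : V} (hvx : v ≠ x) (hvy : v ≠ y) (hvb : v ≠ b) (hxy : x ≠ y)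
    (hxb : x ≠ b) (hyb : y ≠ b) (hexy : G.Adj x y) (heyb : G.Adj y b) (hebv : G.Adj b v) :
    G.IsPathSeq (fun i => [x, y, b, v].getD i v) 3 where
  injOn i hi j hj hij := by
    simp only [mem_Iic] at hi hj
    interval_cases i <;> interval_cases j <;> simp_all [eq_comm]
  adj i hi := by
    interval_cases i <;> simpa

end SimpleGraph

theorem betweenGraph_pathFree_of_oddCycleFree_general {V : Type*}
    (k : ℕ) (hk : 2 ≤ k) (G : SimpleGraph V)
    (hfree : ¬ G.ContainsSub (cycleGraph (2 * k + 1)))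
    (v x y b : V)
    (hvx : v ≠ x) (hvy : v ≠ y) (hvb : v ≠ b) (hxy : x ≠ y) (hxb : x ≠ b) (hyb : y ≠ b)
    (hexy : G.Adj x y) (heyb : G.Adj y b) (hebv : G.Adj b v)
    (X T : Set V)
    (hX : X ⊆ G.neighborSet v ∩ G.neighborSet x)
    (hXT : Disjoint X T)
    (hX4 : Disjoint X {v, x, y, b}) (hT4 : Disjoint T ({v, x, y, b} : Set V)) :
    ¬ (G.betweenGraph X T).ContainsSub (pathGraph (2 * k - 1)) := by
  intro hpath
  obtain ⟨m, rfl⟩ : ∃ m, k = m + 2 := ⟨k - 2, by omega⟩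
  obtain ⟨p, hp⟩ := ContainsSub.exists_isPathSeq (n := 2 * m + 2) hpath
  obtain ⟨s, hs, hfirst, hlast⟩ := hp.exists_ends_mem hXT
  have hseg := (hp.segment (s := s) (m := 2 * m) (by omega)).mono betweenGraph_le
  have hxybv := isPathSeq_four hvx hvy hvb hxy hxb hyb hexy heyb hebv
  have hdisj : Disjoint ((fun i => p (s + i)) '' Iic (2 * m))
      ((fun i => [x, y, b, v].getD i v) '' Iic 3) := by
    refine Disjoint.mono ?_ ?_ (hX4.union_left hT4)
    · rintro _ ⟨i, hi, rfl⟩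
      exact hp.mem_union (by rw [mem_Iic] at hi; omega)
    · rintro _ ⟨j, hj, rfl⟩
      simp only [mem_Iic] at hj
      interval_cases j <;> simp
  have hcycle := (hseg.append hxybv hdisj (hX hlast).2.symm).containsSub_cycleGraph
    (by simpa [seqAppend] using (hX hfirst).1)
  exact hfree (by rwa [show 2 * (m + 2) + 1 = 2 * m + 3 + 1 + 1 by omega])

/-- Claim 3.4(2): if `G` is `C_{2k+1}`-free, `v, x, y, b` are distinct vertices with
`xy, yb, bv ∈ E(G)`, `X ⊆ N(v) ∩ N(x)`, and `T` is disjoint from `X` with both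
`X` and `T` disjoint from `{v, x, y, b}`, then the bipartite subgraph of edges between
`X` and `T` is `P_{2k-1}`-free. -/
theorem betweenGraph_pathFree_of_oddCycleFree {V : Type*} [Fintype V] [DecidableEq V]
    (k : ℕ) (hk : 2 ≤ k) (G : SimpleGraph V)
    (hfree : ¬ G.ContainsSub (cycleGraph (2 * k + 1)))
    (v x y b : V)
    (hvx : v ≠ x) (hvy : v ≠ y) (hvb : v ≠ b) (hxy : x ≠ y) (hxb : x ≠ b) (hyb : y ≠ b)
    (hexy : G.Adj x y) (heyb : G.Adj y b) (hebv : G.Adj b v)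
    (X T : Set V)
    (hX : X ⊆ G.neighborSet v ∩ G.neighborSet x)
    (hXT : Disjoint X T)
    (hX4 : Disjoint X {v, x, y, b}) (hT4 : Disjoint T ({v, x, y, b} : Set V)) :
    ¬ (G.betweenGraph X T).ContainsSub (pathGraph (2 * k - 1)) :=
  betweenGraph_pathFree_of_oddCycleFree_general k hk G hfree v x y b hvx hvy hvb hxy hxb hyb hexy
    heyb hebv X T hX hXT hX4 hT4
end

section
/- Let t ≥ 1 be an integer and let B be the blown-up 5-cycle: the graph with vertex set (ℤ/5ℤ) × {1, …, t} in which (i, a) and (j, b) are adjacent if and only if j − i ≡ 1 or −1 (mod 5). Then B is triangle-free, B has maximum degree 2t, and the strong clique number of B satisfies ω₂'(B) = 5t² (in particular its entire edge set is a strong clique). -/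
open SimpleGraph

/-- The blown-up `5`-cycle: vertex set `(ℤ/5ℤ) × {1, …, t}` with `(i, a)` adjacent to
`(j, b)` iff `j - i ≡ ±1 (mod 5)`. -/
def blownUpC5 (t : ℕ) : SimpleGraph (ZMod 5 × Fin t) where
  Adj p q := q.1 - p.1 = 1 ∨ q.1 - p.1 = -1
  symm := by
    constructor
    intro p q h
    rcases h with h | h
    · right; rw [← neg_sub, h]
    · left; rw [← neg_sub, h, neg_neg]
  loopless := by
    constructor
    intro p h
    rw [sub_self] at h
    revert h
    decide

instance (t : ℕ) : DecidableRel (blownUpC5 t).Adj := fun p q =>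
  inferInstanceAs (Decidable (q.1 - p.1 = 1 ∨ q.1 - p.1 = -1))

/-!
Adjacency in `blownUpC5 t` only depends on the `ZMod 5` coordinates, so everything reduces to the
5-cycle. It has no triangle, and any two of its edges share a vertex or are joined by an edge; in
the blow-up a shared vertex becomes an edge between the other two endpoints, so any two edges have
adjacent endpoints. Hence the whole edge set is a strong clique and `ω₂'` is the number of edges,
which is `5t²` since the graph is `2t`-regular on `5t` vertices.
-/

open Finset

namespace SimpleGraph

variable {V W : Type*} {G : SimpleGraph V}

theorem containsSub_iff_isContained {H : SimpleGraph W} : G.ContainsSub H ↔ H ⊑ G :=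
  ⟨fun ⟨f, hf, hadj⟩ => ⟨⟨⟨f, hadj _ _⟩, hf⟩⟩, fun ⟨e⟩ => ⟨e, e.injective, fun _ _ => e.toHom.map_adj⟩⟩

theorem containsSub_cycleGraph_three_iff : G.ContainsSub (cycleGraph 3) ↔ ¬ G.CliqueFree 3 := by
  rw [containsSub_iff_isContained, cycleGraph_three_eq_top, not_cliqueFree_iff_top_isContained]

theorem IsStrongClique.subset_edgeFinset [Fintype G.edgeSet] {F : Finset (Sym2 V)}
    (hF : G.IsStrongClique F) : F ⊆ G.edgeFinset :=
  fun _ he => mem_edgeFinset.2 (hF.1 he)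

theorem strongCliqueNumber_eq_card_edgeFinset [Fintype G.edgeSet]
    (h : G.IsStrongClique G.edgeFinset) : G.strongCliqueNumber = #G.edgeFinset := by
  refine IsGreatest.csSup_eq ⟨⟨_, h, rfl⟩, ?_⟩
  rintro _ ⟨F, hF, rfl⟩
  exact card_le_card hF.subset_edgeFinset

theorem IsRegularOfDegree.two_mul_card_edgeFinset [Fintype V] [DecidableRel G.Adj] {d : ℕ}
    (h : G.IsRegularOfDegree d) : 2 * #G.edgeFinset = Fintype.card V * d := by
  rw [← sum_degrees_eq_twice_card_edges]
  simp [h.degree_eq]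

end SimpleGraph

namespace blownUpC5

open SimpleGraph

variable {t : ℕ}

theorem neighborFinset_eq (p : ZMod 5 × Fin t) :
    (blownUpC5 t).neighborFinset p = ({p.1 + 1, p.1 - 1} : Finset (ZMod 5)) ×ˢ univ := by
  ext q
  simp only [mem_neighborFinset, mem_product, mem_insert, mem_singleton, mem_univ, and_true]
  refine or_congr ?_ ?_ <;> constructor <;> intro h <;> linear_combination h

theorem isRegularOfDegree : (blownUpC5 t).IsRegularOfDegree (2 * t) := fun p => by
  have hne : p.1 + 1 ≠ p.1 - 1 := by
    intro h
    exact absurd (by linear_combination h : (2 : ZMod 5) = 0) (by decide)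
  rw [← card_neighborFinset_eq_degree, neighborFinset_eq, card_product, card_univ,
    Fintype.card_fin, card_pair hne]

theorem card_edgeFinset : #(blownUpC5 t).edgeFinset = 5 * t ^ 2 := by
  have h := (isRegularOfDegree (t := t)).two_mul_card_edgeFinset
  simp only [Fintype.card_prod, ZMod.card, Fintype.card_fin] at h
  linarith

theorem cliqueFree_three : (blownUpC5 t).CliqueFree 3 := by
  intro s hs
  obtain ⟨p, q, r, hpq, hpr, hqr, -⟩ := is3Clique_iff.1 hs
  have no_triangle : ∀ a b c : ZMod 5, (b - a = 1 ∨ b - a = -1) → (c - a = 1 ∨ c - a = -1) →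
      ¬ (c - b = 1 ∨ c - b = -1) := by decide
  exact no_triangle p.1 q.1 r.1 hpq hpr hqr

theorem isStrongClique_edgeFinset : (blownUpC5 t).IsStrongClique (blownUpC5 t).edgeFinset := by
  refine ⟨fun _ he => mem_edgeFinset.1 he, fun e he f hf _ => ?_⟩
  induction e using Sym2.ind with | _ p q => ?_
  induction f using Sym2.ind with | _ r s => ?_
  rw [mem_edgeFinset, mem_edgeSet] at he hf
  have edges_joined : ∀ a b c d : ZMod 5, (b - a = 1 ∨ b - a = -1) → (d - c = 1 ∨ d - c = -1) →
      (c - a = 1 ∨ c - a = -1) ∨ (d - a = 1 ∨ d - a = -1) ∨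
        (c - b = 1 ∨ c - b = -1) ∨ (d - b = 1 ∨ d - b = -1) := by decide
  rcases edges_joined p.1 q.1 r.1 s.1 he hf with h | h | h | h
  · exact ⟨p, Sym2.mem_mk_left _ _, r, Sym2.mem_mk_left _ _, .inr h⟩
  · exact ⟨p, Sym2.mem_mk_left _ _, s, Sym2.mem_mk_right _ _, .inr h⟩
  · exact ⟨q, Sym2.mem_mk_right _ _, r, Sym2.mem_mk_left _ _, .inr h⟩
  · exact ⟨q, Sym2.mem_mk_right _ _, s, Sym2.mem_mk_right _ _, .inr h⟩

end blownUpC5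

/-- The blown-up `5`-cycle is triangle-free, has maximum degree `2t`, its whole edge
set is a strong clique, and its strong clique number is `5t²`. -/
theorem blownUpC5_strongCliqueNumber (t : ℕ) (ht : 1 ≤ t) :
    ¬ (blownUpC5 t).ContainsSub (cycleGraph 3) ∧
    (blownUpC5 t).maxDegree = 2 * t ∧
    (blownUpC5 t).IsStrongClique (blownUpC5 t).edgeFinset ∧
    (blownUpC5 t).strongCliqueNumber = 5 * t ^ 2 := by
  have : Nonempty (Fin t) := ⟨⟨0, ht⟩⟩
  refine ⟨?_, blownUpC5.isRegularOfDegree.maxDegree_eq, blownUpC5.isStrongClique_edgeFinset, ?_⟩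
  · exact SimpleGraph.containsSub_cycleGraph_three_iff.not_left.2 blownUpC5.cliqueFree_three
  · rw [SimpleGraph.strongCliqueNumber_eq_card_edgeFinset blownUpC5.isStrongClique_edgeFinset,
      blownUpC5.card_edgeFinset]
end
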